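/- Let E be a lattice effect algebra with natural implication x→y := y+(x∨y)'. Then the identities ((x→y)→y)→y = x→y, x→((x→y)→y) = 1, and y→((x→y)→y) = 1 hold for all x,y ∈ E. -/
import Mathlib


/-- An effect algebra `(E,+,',0,1)`.  The partial addition is encoded by a total
function `add` together with a definedness predicate `D`; the axioms only
constrain `add` on defined pairs. -/
structure EffectAlgebra (E : Type*) where
  /-- definedness predicate for the partial addition -/
  D : E → E → Prop
  /-- the (partial) addition -/
  add : E → E → E
  /-- the complementation `x ↦ x'` -/
  compl : E → E
  zero : E
  one : E
  /-- (E1) -/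
  comm_def : ∀ {a b : E}, D a b → D b a
  comm : ∀ {a b : E}, D a b → add a b = add b a
  /-- (E2): `(a+b)+c` is defined iff `a+(b+c)` is defined -/
  assoc_def : ∀ a b c : E, (D a b ∧ D (add a b) c) ↔ (D b c ∧ D a (add b c))
  assoc : ∀ a b c : E, D a b → D (add a b) c → add (add a b) c = add a (add b c)
  /-- (E3): `a + b` is defined and equals `1` iff `b = a'` -/
  orth : ∀ a b : E, (D a b ∧ add a b = one) ↔ b = compl a
  /-- (E4) -/
  one_add : ∀ a : E, D one a → a = zero

/-- The induced order of an effect algebra: `a ≤ b` iff `a + c = b` for some `c`. -/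
def EffectAlgebra.le {E : Type*} (A : EffectAlgebra E) (a b : E) : Prop :=
  ∃ c, A.D a c ∧ A.add a c = b

/-- A lattice effect algebra: an effect algebra whose induced order is a lattice. -/
structure LatticeEffectAlgebra (E : Type*) extends EffectAlgebra E where
  sup : E → E → E
  inf : E → E → E
  le_sup_left : ∀ a b : E, toEffectAlgebra.le a (sup a b)
  le_sup_right : ∀ a b : E, toEffectAlgebra.le b (sup a b)
  sup_le : ∀ a b c : E, toEffectAlgebra.le a c → toEffectAlgebra.le b c →
    toEffectAlgebra.le (sup a b) c
  inf_le_left : ∀ a b : E, toEffectAlgebra.le (inf a b) a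
  inf_le_right : ∀ a b : E, toEffectAlgebra.le (inf a b) b
  le_inf : ∀ a b c : E, toEffectAlgebra.le c a → toEffectAlgebra.le c b →
    toEffectAlgebra.le c (inf a b)

/-- The natural implication `x → y := y + (x ∨ y)'` of a lattice effect algebra.
(The sum is always defined since `(x ∨ y)' ≤ y'`.) -/
def LatticeEffectAlgebra.imp {E : Type*} (L : LatticeEffectAlgebra E) (x y : E) : E :=
  L.add y (L.compl (L.sup x y))

namespace EffectAlgebra

variable {E : Type*} (A : EffectAlgebra E)

lemma d_compl (a : E) : A.D a (A.compl a) ∧ A.add a (A.compl a) = A.one :=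
  (A.orth a (A.compl a)).mpr rfl

lemma compl_compl (a : E) : A.compl (A.compl a) = a := by
  obtain ⟨hd, he⟩ := A.d_compl a
  have hd' := A.comm_def hd
  exact ((A.orth (A.compl a) a).mp ⟨hd', by rw [A.comm hd', he]⟩).symm

lemma one_compl : A.compl A.one = A.zero := by
  obtain ⟨hd, _⟩ := A.d_compl A.one
  exact A.one_add _ hd

lemma d_one_zero : A.D A.one A.zero ∧ A.add A.one A.zero = A.one := by
  have h := A.d_compl A.one
  rwa [A.one_compl] at h

lemma add_zero (a : E) : A.D a A.zero ∧ A.add a A.zero = a := by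
  obtain ⟨hd, he⟩ := A.d_compl a
  have hd' := A.comm_def hd
  have he' : A.add (A.compl a) a = A.one := by rw [A.comm hd', he]
  have h10 := A.d_one_zero
  have hD : A.D (A.add (A.compl a) a) A.zero := he' ▸ h10.1
  have h2 := (A.assoc_def (A.compl a) a A.zero).mp ⟨hd', hD⟩
  have h3 := A.assoc (A.compl a) a A.zero hd' hD
  rw [he', h10.2] at h3
  have h4 := (A.orth (A.compl a) (A.add a A.zero)).mp ⟨h2.2, h3.symm⟩
  rw [A.compl_compl] at h4
  exact ⟨h2.1, h4⟩

/-- `b + (a+b)' = a'` whenever `a+b` is defined. -/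
lemma orth_rearrange {a b : E} (hab : A.D a b) :
    A.D b (A.compl (A.add a b)) ∧
      A.add b (A.compl (A.add a b)) = A.compl a := by
  obtain ⟨hd1, he1⟩ := A.d_compl (A.add a b)
  have h2 := (A.assoc_def a b (A.compl (A.add a b))).mp ⟨hab, hd1⟩
  have h3 := A.assoc a b _ hab hd1
  rw [he1] at h3
  exact ⟨h2.1, (A.orth a _).mp ⟨h2.2, h3.symm⟩⟩

lemma cancel {a b c : E} (hab : A.D a b) (hac : A.D a c)
    (h : A.add a b = A.add a c) : b = c := by
  have hb := A.orth_rearrange hab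
  have hc := A.orth_rearrange hac
  rw [← h] at hc
  have hb2 := A.orth_rearrange hb.1
  have hc2 := A.orth_rearrange hc.1
  rw [hb.2, A.compl_compl] at hb2
  rw [hc.2, A.compl_compl] at hc2
  have : A.compl b = A.compl c := by rw [← hb2.2, ← hc2.2]
  calc b = A.compl (A.compl b) := (A.compl_compl b).symm
    _ = A.compl (A.compl c) := by rw [this]
    _ = c := A.compl_compl c

lemma eq_zero_of_add_eq_zero {c d : E} (h : A.D c d)
    (he : A.add c d = A.zero) : c = A.zero := by
  have h10 := A.d_one_zero
  have h01 : A.D A.zero A.one := A.comm_def h10.1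
  have hD : A.D (A.add c d) A.one := he ▸ h01
  have h2 := (A.assoc_def c d A.one).mp ⟨h, hD⟩
  have h3 := A.assoc c d A.one h hD
  rw [he, A.comm h01, h10.2] at h3
  have h4 : A.add d A.one = A.compl c := (A.orth c _).mp ⟨h2.2, h3.symm⟩
  have hd0 : d = A.zero := A.one_add d (A.comm_def h2.1)
  rw [hd0, A.comm h01, h10.2] at h4
  calc c = A.compl (A.compl c) := (A.compl_compl c).symm
    _ = A.compl A.one := by rw [← h4]
    _ = A.zero := A.one_compl

lemma le_refl (a : E) : A.le a a := ⟨A.zero, A.add_zero a⟩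

lemma le_antisymm {a b : E} (h1 : A.le a b) (h2 : A.le b a) : a = b := by
  obtain ⟨c, hc, hce⟩ := h1
  obtain ⟨d, hd, hde⟩ := h2
  have hD : A.D (A.add a c) d := hce ▸ hd
  have h3 := (A.assoc_def a c d).mp ⟨hc, hD⟩
  have h4 := A.assoc a c d hc hD
  rw [hce, hde] at h4
  have h5 : A.add a (A.add c d) = A.add a A.zero := by
    rw [(A.add_zero a).2]; exact h4.symm
  have h6 := A.cancel h3.2 (A.add_zero a).1 h5
  have hc0 : c = A.zero := A.eq_zero_of_add_eq_zero h3.1 h6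
  rw [← hce, hc0, (A.add_zero a).2]

end EffectAlgebra

namespace LatticeEffectAlgebra

variable {E : Type*} (L : LatticeEffectAlgebra E)

lemma sup_eq_right {a b : E} (h : L.toEffectAlgebra.le a b) : L.sup a b = b :=
  L.toEffectAlgebra.le_antisymm
    (L.sup_le a b b h (L.toEffectAlgebra.le_refl b)) (L.le_sup_right a b)

lemma sup_eq_left {a b : E} (h : L.toEffectAlgebra.le b a) : L.sup a b = a :=
  L.toEffectAlgebra.le_antisymm
    (L.sup_le a b a (L.toEffectAlgebra.le_refl a) h) (L.le_sup_left a b)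

/-- Key lemma: `(x→y)→y = x ∨ y`. -/
lemma imp_imp_eq_sup (x y : E) : L.imp (L.imp x y) y = L.sup x y := by
  set A := L.toEffectAlgebra with hA
  set s := L.sup x y with hs
  -- y ≤ s, so D y s' and y + s' = imp x y
  obtain ⟨c, hc, hcs⟩ := L.le_sup_right x y
  have hcy : A.D c y := A.comm_def hc
  have hr := A.orth_rearrange hcy
  rw [A.comm hcy, hcs] at hr
  -- hr : A.D y (A.compl s) ∧ A.add y (A.compl s) = A.compl c
  set t := L.imp x y with ht
  have htdef : t = A.add y (A.compl s) := rfl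
  -- y ≤ t
  have hyt : A.le y t := ⟨A.compl s, hr.1, htdef.symm⟩
  -- y + t' = s
  have hsy : A.D (A.compl s) y := A.comm_def hr.1
  have hr2 := A.orth_rearrange hsy
  rw [A.comm hsy, ← htdef, A.compl_compl] at hr2
  -- hr2 : A.D y (A.compl t) ∧ A.add y (A.compl t) = s
  show A.add y (A.compl (L.sup t y)) = s
  rw [L.sup_eq_left hyt, hr2.2]

end LatticeEffectAlgebra

/-- Theorem 2.2 (v)--(vii): `((x→y)→y)→y = x→y`, `x→((x→y)→y) = 1`
and `y→((x→y)→y) = 1`. -/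
theorem imp_imp_imp_identities {E : Type*} (L : LatticeEffectAlgebra E) (x y : E) :
    L.imp (L.imp (L.imp x y) y) y = L.imp x y ∧
    L.imp x (L.imp (L.imp x y) y) = L.one ∧
    L.imp y (L.imp (L.imp x y) y) = L.one := by
  have key := L.imp_imp_eq_sup x y
  have hx : L.toEffectAlgebra.le x (L.sup x y) := L.le_sup_left x y
  have hy : L.toEffectAlgebra.le y (L.sup x y) := L.le_sup_right x y
  refine ⟨?_, ?_, ?_⟩
  · rw [key]
    show L.add y (L.compl (L.sup (L.sup x y) y)) = L.imp x y
    rw [L.sup_eq_left hy]; rfl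
  · rw [key]
    show L.add (L.sup x y) (L.compl (L.sup x (L.sup x y))) = L.one
    rw [L.sup_eq_right hx]
    exact (L.toEffectAlgebra.d_compl (L.sup x y)).2
  · rw [key]
    show L.add (L.sup x y) (L.compl (L.sup y (L.sup x y))) = L.one
    rw [L.sup_eq_right hy]
    exact (L.toEffectAlgebra.d_compl (L.sup x y)).2
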